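/- Let λ, μ ∈ ℝ with δ = μ−λ ∉ {1, 3/2, 2}. Let φ : ℝ → ℝ be smooth with φ′ > 0 everywhere, and set Γ = φ″/φ′ and S(φ) = φ‴/φ′ − (3/2)(φ″/φ′)² (the Schwarzian derivative of φ). For smooth functions P, f : ℝ → ℝ define the covariant derivatives ∇f = f′ − λΓf, ∇²f = (∇f)′ − (1+λ)Γ(∇f), ∇P = P′ + (2−δ)ΓP, ∇²P = (∇P)′ + (1−δ)Γ(∇P). Then the intrinsic one-dimensional conformally equivariant quantization coincides with its expression in the adapted coordinate: for all P, f, P·∇²f + ((2λ+1)/(2−δ))(∇P)(∇f) + (λ(2λ+1)/((3−2δ)(2−δ)))(∇²P)·f − (2λ(μ−1)/(3−2δ))·S(φ)·P·f = P·f″ + ((2λ+1)/(2−δ))·P′·f′ + (λ(2λ+1)/((3−2δ)(2−δ)))·P″·f. -/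

import Mathlib

noncomputable section

/-- The Christoffel symbol `Γ = φ″/φ′` of the metric `g = φ′(x)² dx²`. -/
def Gam (φ : ℝ → ℝ) : ℝ → ℝ := fun x => deriv (deriv φ) x / deriv φ x

/-- The Schwarzian derivative `S(φ) = φ‴/φ′ − (3/2)(φ″/φ′)²`. -/
def Schw (φ : ℝ → ℝ) : ℝ → ℝ :=
  fun x => deriv (deriv (deriv φ)) x / deriv φ x
    - (3 / 2) * (deriv (deriv φ) x / deriv φ x) ^ 2

/-- Covariant derivative of a `λ`-density: `∇f = f′ − λΓf`. -/
def nabF (φ : ℝ → ℝ) (lam : ℝ) (f : ℝ → ℝ) : ℝ → ℝ :=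
  fun x => deriv f x - lam * Gam φ x * f x

/-- Second covariant derivative of a `λ`-density: `∇²f = (∇f)′ − (1+λ)Γ(∇f)`. -/
def nab2F (φ : ℝ → ℝ) (lam : ℝ) (f : ℝ → ℝ) : ℝ → ℝ :=
  fun x => deriv (nabF φ lam f) x - (1 + lam) * Gam φ x * nabF φ lam f x

/-- Covariant derivative of a quadratic symbol of weight `δ`: `∇P = P′ + (2−δ)ΓP`. -/
def nabP (φ : ℝ → ℝ) (dlt : ℝ) (P : ℝ → ℝ) : ℝ → ℝ :=
  fun x => deriv P x + (2 - dlt) * Gam φ x * P x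

/-- Second covariant derivative of a quadratic symbol: `∇²P = (∇P)′ + (1−δ)Γ(∇P)`. -/
def nab2P (φ : ℝ → ℝ) (dlt : ℝ) (P : ℝ → ℝ) : ℝ → ℝ :=
  fun x => deriv (nabP φ dlt P) x + (1 - dlt) * Gam φ x * nabP φ dlt P x

private lemma smooth_dAt {g : ℝ → ℝ} (h : ContDiff ℝ (⊤ : ℕ∞) g) (n : ℕ) (x : ℝ) :
    DifferentiableAt ℝ (deriv^[n] g) x :=
  (((h.of_le (by simp)).iterate_deriv n).differentiable (by simp)).differentiableAt

private lemma deriv_Gam {φ : ℝ → ℝ} (hφ : ContDiff ℝ (⊤ : ℕ∞) φ) {x : ℝ}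
    (hx : deriv φ x ≠ 0) :
    deriv (Gam φ) x =
      (deriv (deriv (deriv φ)) x * deriv φ x - deriv (deriv φ) x * deriv (deriv φ) x)
        / deriv φ x ^ 2 := by
  have h2 : DifferentiableAt ℝ (deriv (deriv φ)) x := by
    simpa using smooth_dAt hφ 2 x
  have h1 : DifferentiableAt ℝ (deriv φ) x := by
    simpa using smooth_dAt hφ 1 x
  unfold Gam
  rw [deriv_fun_div h2 h1 hx]

/-- the intrinsic one-dimensional conformally equivariant
quantization coincides with its expression in the adapted coordinate. -/
theorem one_dimensional_quantization_intrinsic_eq_flat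
    (lam mu dlt : ℝ) (hdlt : dlt = mu - lam)
    (hres : dlt ∉ ({1, 3 / 2, 2} : Set ℝ))
    (φ : ℝ → ℝ) (hφ : ContDiff ℝ (⊤ : ℕ∞) φ) (hφ' : ∀ x, 0 < deriv φ x)
    (P f : ℝ → ℝ) (hP : ContDiff ℝ (⊤ : ℕ∞) P) (hf : ContDiff ℝ (⊤ : ℕ∞) f) (x : ℝ) :
    P x * nab2F φ lam f x
      + ((2 * lam + 1) / (2 - dlt)) * nabP φ dlt P x * nabF φ lam f x
      + (lam * (2 * lam + 1) / ((3 - 2 * dlt) * (2 - dlt))) * nab2P φ dlt P x * f x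
      - (2 * lam * (mu - 1) / (3 - 2 * dlt)) * Schw φ x * P x * f x
    = P x * deriv (deriv f) x
      + ((2 * lam + 1) / (2 - dlt)) * deriv P x * deriv f x
      + (lam * (2 * lam + 1) / ((3 - 2 * dlt) * (2 - dlt))) * deriv (deriv P) x * f x := by
  have h2d : (2 : ℝ) - dlt ≠ 0 := by
    intro h
    exact hres (by simp only [Set.mem_insert_iff, Set.mem_singleton_iff]; right; right; linarith)
  have h3d : (3 : ℝ) - 2 * dlt ≠ 0 := by
    intro h
    exact hres (by simp only [Set.mem_insert_iff, Set.mem_singleton_iff]; right; left; linarith)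
  have hx : deriv φ x ≠ 0 := ne_of_gt (hφ' x)
  -- differentiability facts
  have hφ1 : DifferentiableAt ℝ (deriv φ) x := by simpa using smooth_dAt hφ 1 x
  have hφ2 : DifferentiableAt ℝ (deriv (deriv φ)) x := by simpa using smooth_dAt hφ 2 x
  have hGam : DifferentiableAt ℝ (Gam φ) x := hφ2.div hφ1 hx
  have hf0 : DifferentiableAt ℝ f x := by simpa using smooth_dAt hf 0 x
  have hf1 : DifferentiableAt ℝ (deriv f) x := by simpa using smooth_dAt hf 1 x
  have hP0 : DifferentiableAt ℝ P x := by simpa using smooth_dAt hP 0 x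
  have hP1 : DifferentiableAt ℝ (deriv P) x := by simpa using smooth_dAt hP 1 x
  -- derivative of Γ
  have hG' := deriv_Gam hφ hx
  -- derivative of ∇f
  have hnf : deriv (nabF φ lam f) x
      = deriv (deriv f) x
        - (lam * deriv (Gam φ) x * f x + lam * Gam φ x * deriv f x) := by
    unfold nabF
    rw [deriv_fun_sub (g := fun y => lam * Gam φ y * f y) hf1 (((differentiableAt_const lam).mul hGam).mul hf0),
      deriv_fun_mul (c := fun y => lam * Gam φ y) ((differentiableAt_const lam).mul hGam) hf0,
      deriv_const_mul lam hGam]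
  -- derivative of ∇P
  have hnP : deriv (nabP φ dlt P) x
      = deriv (deriv P) x
        + ((2 - dlt) * deriv (Gam φ) x * P x + (2 - dlt) * Gam φ x * deriv P x) := by
    unfold nabP
    rw [deriv_fun_add (g := fun y => (2 - dlt) * Gam φ y * P y) hP1 (((differentiableAt_const (2 - dlt)).mul hGam).mul hP0),
      deriv_fun_mul (c := fun y => (2 - dlt) * Gam φ y) ((differentiableAt_const (2 - dlt)).mul hGam) hP0,
      deriv_const_mul (2 - dlt) hGam]
  subst hdlt
  -- expand everything
  simp only [nab2F, nab2P, nabF, nabP, Schw, Gam] at *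
  rw [hnf, hnP, hG']
  have hS : deriv (deriv (deriv φ)) x / deriv φ x
      = (deriv (deriv (deriv φ)) x * deriv φ x
          - deriv (deriv φ) x * deriv (deriv φ) x) / deriv φ x ^ 2
        + (deriv (deriv φ) x / deriv φ x) ^ 2 := by
    field_simp
    ring
  rw [hS]
  field_simp
  ring
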